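/- arXiv:1705.06007 — 2 statements merged into one kernel-verified Lean document; each statement's English description precedes it below -/
import Mathlib

section
/- Let α_1, …, α_m ∈ B_k and let I = ⟨α_1, …, α_m⟩ be the ideal they generate. Then I is the principal ideal generated by the single element Σ_{A ⊆ {1,…,m}, A ≠ ∅} (−1)^{|A|+1} (∏_{j∈A} α_j)^{p^r − 1}. In particular, every ideal of B_k is principal. -/
open MvPolynomial

set_option synthInstance.maxHeartbeats 400000
set_option maxHeartbeats 1000000

noncomputable def relIdeal (p r k : ℕ) [Fact p.Prime] : Ideal (MvPolynomial (Fin k) (GaloisField p r)) :=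
  Ideal.span (Set.range fun i : Fin k => X i ^ 2 - X i)

/-- `B p r k` is the ring `F_{p^r}[v_1,…,v_k]/⟨v_i^2 - v_i⟩`. -/
abbrev B (p r k : ℕ) [Fact p.Prime] :=
  MvPolynomial (Fin k) (GaloisField p r) ⧸ relIdeal p r k

/-- the image of the variable `v_i` in `B p r k`. -/
noncomputable def v (p r k : ℕ) [Fact p.Prime] (i : Fin k) : B p r k :=
  Ideal.Quotient.mk _ (X i)

/-!
Every `x ∈ B_k` satisfies `x ^ q = x` for `q = p ^ r`: the `q`-power Frobenius is an
`F_q`-algebra endomorphism fixing the idempotent generators `v_i`. Hence `e_j = α_j ^ (q - 1)` is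
an idempotent with `α_j e_j = α_j`, and `G = 1 - ∏ j, (1 - e_j)`, which is the inclusion–exclusion
sum of the statement, lies in `⟨α_1, …, α_m⟩` and satisfies `α_j G = α_j` for every `j`.
-/

theorem Finset.one_sub_prod_one_sub {ι R : Type*} [CommRing R] [DecidableEq ι]
    (s : Finset ι) (f : ι → R) :
    1 - ∏ i ∈ s, (1 - f i) = ∑ t ∈ s.powerset.erase ∅, (-1) ^ (t.card + 1) * ∏ i ∈ t, f i := by
  have expand : ∏ i ∈ s, (1 - f i) = ∑ t ∈ s.powerset, (-1) ^ t.card * ∏ i ∈ t, f i := by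
    simp only [sub_eq_add_neg, Finset.prod_one_add, Finset.prod_neg]
  rw [expand, ← Finset.add_sum_erase _ _ (Finset.empty_mem_powerset s)]
  simp [pow_succ, Finset.sum_neg_distrib]

theorem Ideal.span_range_eq_span_inclusionExclusion {ι R : Type*} [CommRing R] [Fintype ι]
    [DecidableEq ι] {q : ℕ} (hq : 2 ≤ q) (α : ι → R) (hα : ∀ i, α i ^ q = α i) :
    Ideal.span (Set.range α) =
      Ideal.span {∑ A ∈ (Finset.univ : Finset ι).powerset.erase ∅,
        (-1 : R) ^ (A.card + 1) * (∏ j ∈ A, α j) ^ (q - 1)} := by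
  set G := ∑ A ∈ (Finset.univ : Finset ι).powerset.erase ∅,
    (-1 : R) ^ (A.card + 1) * (∏ j ∈ A, α j) ^ (q - 1)
  have hG : G = 1 - ∏ j, (1 - α j ^ (q - 1)) := by
    simp only [G, Finset.one_sub_prod_one_sub, Finset.prod_pow]
  have mul_G : ∀ i, α i * G = α i := by
    intro i
    have mul_one_sub_pow : α i * (1 - α i ^ (q - 1)) = 0 := by
      rw [mul_sub, mul_one, ← pow_succ', Nat.sub_add_cancel (by omega), hα, sub_self]
    rw [hG, mul_sub, mul_one, ← Finset.mul_prod_erase _ _ (Finset.mem_univ i), ← mul_assoc,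
      mul_one_sub_pow, zero_mul, sub_zero]
  apply le_antisymm <;> rw [Ideal.span_le]
  · rintro _ ⟨i, rfl⟩
    exact Ideal.mem_span_singleton'.mpr ⟨α i, mul_G i⟩
  · rw [Set.singleton_subset_iff]
    refine Ideal.sum_mem _ fun A hA =>
      Ideal.mul_mem_left _ _ (Ideal.pow_mem_of_mem _ ?_ _ (by omega))
    obtain ⟨j, hj⟩ := Finset.nonempty_iff_ne_empty.mpr (Finset.ne_of_mem_erase hA)
    rw [← Finset.mul_prod_erase A α hj]
    exact Ideal.mul_mem_right _ _ (Ideal.subset_span ⟨j, rfl⟩)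

theorem Ideal.isPrincipal_of_fg_of_pow_eq_self {R : Type*} [CommRing R] {q : ℕ} (hq : 2 ≤ q)
    (h : ∀ x : R, x ^ q = x) {I : Ideal R} (hI : I.FG) : I.IsPrincipal := by
  classical
  obtain ⟨S, rfl⟩ := hI
  have hS : Ideal.span (S : Set R) =
      Ideal.span (Set.range (Subtype.val : {x // x ∈ S} → R)) := by
    rw [Subtype.range_val_subtype]; rfl
  rw [hS, Ideal.span_range_eq_span_inclusionExclusion hq _ fun x => h x.1]
  exact ⟨_, rfl⟩

theorem pow_card_eq_self_of_adjoin_eq_top {K A : Type*} [Field K] [Fintype K] [CommRing A]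
    [Algebra K A] {s : Set A} (hs : Algebra.adjoin K s = ⊤)
    (hgen : ∀ x ∈ s, x ^ Fintype.card K = x) (x : A) : x ^ Fintype.card K = x :=
  AlgHom.congr_fun (AlgHom.ext_of_adjoin_eq_top (φ₁ := FiniteField.frobeniusAlgHom K A)
    (φ₂ := AlgHom.id K A) hs hgen) x

section B

variable (p r k : ℕ) [Fact p.Prime]

theorem v_isIdempotentElem (i : Fin k) : IsIdempotentElem (v p r k i) := by
  rw [IsIdempotentElem, v, ← map_mul, Ideal.Quotient.eq, ← sq]
  exact Ideal.subset_span ⟨i, rfl⟩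

theorem adjoin_range_v : Algebra.adjoin (GaloisField p r) (Set.range (v p r k)) = ⊤ := by
  have : Set.range (v p r k) =
      Ideal.Quotient.mkₐ (GaloisField p r) (relIdeal p r k) '' Set.range X := by
    rw [← Set.range_comp]; rfl
  rw [this, ← AlgHom.map_adjoin, adjoin_range_X, Algebra.map_top, AlgHom.range_eq_top]
  exact Ideal.Quotient.mkₐ_surjective _ _

theorem B_pow_eq_self (hr : r ≠ 0) (x : B p r k) : x ^ p ^ r = x := by
  let := Fintype.ofFinite (GaloisField p r)
  have hcard : Fintype.card (GaloisField p r) = p ^ r := by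
    rw [← Nat.card_eq_fintype_card, GaloisField.card p r hr]
  rw [← hcard]
  refine pow_card_eq_self_of_adjoin_eq_top (adjoin_range_v p r k) ?_ x
  rintro _ ⟨i, rfl⟩
  exact (v_isIdempotentElem p r k i).pow_eq Fintype.card_ne_zero

end B

/-- The ideal `⟨α_1, …, α_m⟩` of `B_k` is generated by the single element
`Σ_{∅ ≠ A ⊆ {1,…,m}} (−1)^{|A|+1} (∏_{j∈A} α_j)^{p^r−1}`; in particular every ideal of
`B_k` is principal. -/
theorem stmt_7 (p r k m : ℕ) [Fact p.Prime] (hr : 1 ≤ r) (α : Fin m → B p r k) :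
    Ideal.span (Set.range α) =
      Ideal.span {∑ A ∈ (Finset.univ : Finset (Fin m)).powerset.erase ∅,
        (-1 : B p r k) ^ (A.card + 1) * (∏ j ∈ A, α j) ^ (p ^ r - 1)} ∧
    ∀ I : Ideal (B p r k), I.IsPrincipal := by
  have hq : 2 ≤ p ^ r :=
    (Nat.Prime.two_le Fact.out).trans (Nat.le_self_pow (by omega) p)
  have pow_eq_self := B_pow_eq_self p r k (by omega)
  exact ⟨Ideal.span_range_eq_span_inclusionExclusion hq α fun i => pow_eq_self _,
    fun I => Ideal.isPrincipal_of_fg_of_pow_eq_self hq pow_eq_self (IsNoetherian.noetherian I)⟩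
end

section
/- For every k ≥ 1, every 1 ≤ i ≤ k, and every x ∈ B_k, one has Σ_{i,k}(Φ_k(x)) = Φ_k(Θ_i(x)). -/
open MvPolynomial

set_option synthInstance.maxHeartbeats 400000
set_option maxHeartbeats 1000000

lemma v_idem (p r k : ℕ) [Fact p.Prime] (i : Fin k) : v p r k i ^ 2 = v p r k i := by
  have h : (X i ^ 2 - X i : MvPolynomial (Fin k) (GaloisField p r)) ∈ relIdeal p r k :=
    Ideal.subset_span ⟨i, rfl⟩
  have h2 := (Ideal.Quotient.eq_zero_iff_mem).mpr h
  rw [map_sub, map_pow] at h2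
  have h3 := sub_eq_zero.mp h2
  simpa [v] using h3

lemma one_sub_v_idem (p r k : ℕ) [Fact p.Prime] (i : Fin k) :
    (1 - v p r k i) ^ 2 = 1 - v p r k i := by
  have h : (1 - v p r k i) ^ 2 = 1 - 2 * v p r k i + v p r k i ^ 2 := by ring
  rw [h, v_idem]; ring

noncomputable def ThAux (p r k : ℕ) [Fact p.Prime] (S : Finset (Fin k)) :
    MvPolynomial (Fin k) (GaloisField p r) →+* B p r k :=
  (aeval (fun i : Fin k => if i ∈ S then 1 - v p r k i else v p r k i)).toRingHom

lemma ThAux_cond (p r k : ℕ) [Fact p.Prime] (S : Finset (Fin k)) :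
    relIdeal p r k ≤ RingHom.ker (ThAux p r k S) := by
  refine Ideal.span_le.mpr ?_
  rintro _ ⟨i, rfl⟩
  simp only [SetLike.mem_coe, RingHom.mem_ker, ThAux, AlgHom.toRingHom_eq_coe,
    RingHom.coe_coe, map_sub, map_pow, aeval_X]
  by_cases h : i ∈ S
  · rw [if_pos h, one_sub_v_idem, sub_self]
  · rw [if_neg h, v_idem, sub_self]

/-- The automorphism `Θ_S` of `B_k`, determined by `v_i ↦ 1 - v_i` for `i ∈ S` and
`v_i ↦ v_i` otherwise, fixing `F_{p^r}` pointwise. -/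
noncomputable def Th (p r k : ℕ) [Fact p.Prime] (S : Finset (Fin k)) :
    B p r k →+* B p r k :=
  Ideal.Quotient.lift (relIdeal p r k) (ThAux p r k S) (fun _ ha => ThAux_cond p r k S ha)

noncomputable def LamAux (p r k : ℕ) [Fact p.Prime] (π : Equiv.Perm (Fin k)) (t : ℕ) :
    MvPolynomial (Fin k) (GaloisField p r) →+* B p r k :=
  eval₂Hom ((Ideal.Quotient.mk (relIdeal p r k)).comp
      ((C : GaloisField p r →+* MvPolynomial (Fin k) (GaloisField p r)).comp
        (iterateFrobenius (GaloisField p r) p t)))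
    (fun i => v p r k (π i))

lemma LamAux_cond (p r k : ℕ) [Fact p.Prime] (π : Equiv.Perm (Fin k)) (t : ℕ) :
    relIdeal p r k ≤ RingHom.ker (LamAux p r k π t) := by
  refine Ideal.span_le.mpr ?_
  rintro _ ⟨i, rfl⟩
  simp only [SetLike.mem_coe, RingHom.mem_ker, LamAux, map_sub, map_pow, eval₂Hom_X']
  rw [v_idem, sub_self]

/-- The automorphism `Λ_{π,t}` of `B_k`, acting on `F_{p^r}` as the Frobenius power
`α ↦ α^{p^t}` and sending `v_i ↦ v_{π(i)}`. -/
noncomputable def Lam (p r k : ℕ) [Fact p.Prime] (π : Equiv.Perm (Fin k)) (t : ℕ) :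
    B p r k →+* B p r k :=
  Ideal.Quotient.lift (relIdeal p r k) (LamAux p r k π t) (fun _ ha => LamAux_cond p r k π t ha)

noncomputable def PhiAux (p r k : ℕ) [Fact p.Prime] :
    MvPolynomial (Fin k) (GaloisField p r) →+* (Fin (2 ^ k) → GaloisField p r) :=
  Pi.ringHom fun j =>
    eval₂Hom (RingHom.id (GaloisField p r))
      (fun i : Fin k => if Nat.testBit (j : ℕ) (i : ℕ) then 1 else 0)

lemma PhiAux_cond (p r k : ℕ) [Fact p.Prime] :
    relIdeal p r k ≤ RingHom.ker (PhiAux p r k) := by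
  refine Ideal.span_le.mpr ?_
  rintro _ ⟨i, rfl⟩
  simp only [SetLike.mem_coe, RingHom.mem_ker, PhiAux]
  funext j
  simp only [Pi.ringHom, RingHom.pi_apply, map_sub, map_pow, eval₂Hom_X']
  by_cases h : Nat.testBit (j : ℕ) (i : ℕ) <;> simp [h]

/-- The Gray map `Φ_k : B_k → F_{p^r}^{2^k}`: the coordinate indexed by `j` is the
evaluation of (a representative of) an element of `B_k` at the point whose `i`-th
coordinate is the `i`-th binary digit of `j`.  This agrees with the recursive
definition `Φ_k(α + β v_k) = (Φ_{k-1}(α), Φ_{k-1}(α + β))`, `Φ_0 = id`. -/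
noncomputable def Phi (p r k : ℕ) [Fact p.Prime] :
    B p r k →+* (Fin (2 ^ k) → GaloisField p r) :=
  Ideal.Quotient.lift (relIdeal p r k) (PhiAux p r k) (fun _ ha => PhiAux_cond p r k ha)

lemma sum_two_pow_lt (k : ℕ) (S : Finset (Fin k)) : (∑ i ∈ S, 2 ^ (i : ℕ)) < 2 ^ k := by
  have h1 : (∑ i ∈ S, 2 ^ (i : ℕ)) ≤ ∑ i ∈ (Finset.univ : Finset (Fin k)), 2 ^ (i : ℕ) :=
    Finset.sum_le_sum_of_subset (Finset.subset_univ S)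
  have h2 : ∑ i ∈ (Finset.univ : Finset (Fin k)), 2 ^ (i : ℕ) =
      ∑ i ∈ Finset.range k, 2 ^ i := Fin.sum_univ_eq_sum_range _ _
  have h3 : ∀ n : ℕ, (∑ i ∈ Finset.range n, 2 ^ i) < 2 ^ n := by
    intro n
    induction n with
    | zero => simp
    | succ m ih => rw [Finset.sum_range_succ, pow_succ]; omega
  have h4 := h3 k
  omega

/-- The permutation `Σ_{S,k}` of `{1,…,2^k}` : on 0-based indices it is
`j ↦ j XOR (Σ_{i ∈ S} 2^{i-1})`, i.e. the composition over `i ∈ S` of the permutations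
`Σ_{i,k}` which, within each consecutive block of `2^i` coordinates, cyclically shift the
block by `2^{i-1}` positions (flip the binary digit `i-1`). -/
def SigmaPerm (k : ℕ) (S : Finset (Fin k)) : Equiv.Perm (Fin (2 ^ k)) :=
  Function.Involutive.toPerm
    (fun j => ⟨(j : ℕ) ^^^ ∑ i ∈ S, 2 ^ (i : ℕ),
      Nat.xor_lt_two_pow j.isLt (sum_two_pow_lt k S)⟩)
    (by
      intro j
      apply Fin.ext
      simp [Nat.xor_assoc])

/-!
The `j`-th coordinate of `Φ_k` is evaluation at the binary digits of `j`, and `Σ_S` XORs `j`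
with `∑_{i ∈ S} 2^i`, i.e. flips the digits in `S`. Flipping the digit `i` of the evaluation
point is the same as evaluating after `v_i ↦ 1 - v_i`, so both sides are ring homomorphisms
`B_k → F_{p^r}` that agree on the constants and on the generators `v_n`.
-/

theorem Nat.testBit_sum_two_pow (s : Finset ℕ) (n : ℕ) :
    (∑ i ∈ s, 2 ^ i).testBit n = decide (n ∈ s) := by
  have hmem := Nat.mem_bitIndices (i := n) (n := ∑ i ∈ s, 2 ^ i)
  rw [← List.mem_toFinset, Finset.toFinset_bitIndices_sum_two_pow] at hmem
  exact Bool.eq_iff_iff.mpr (by simpa using hmem.symm)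

section GrayMap

variable (p r k : ℕ) [Fact p.Prime]

theorem Phi_mk (f : MvPolynomial (Fin k) (GaloisField p r)) (j : Fin (2 ^ k)) :
    Phi p r k (Ideal.Quotient.mk _ f) j =
      eval (fun i : Fin k => if (j : ℕ).testBit i then 1 else 0) f :=
  rfl

theorem Phi_mk_C (a : GaloisField p r) (j : Fin (2 ^ k)) :
    Phi p r k (Ideal.Quotient.mk _ (C a)) j = a := by
  rw [Phi_mk, eval_C]

theorem Phi_v (n : Fin k) (j : Fin (2 ^ k)) :
    Phi p r k (v p r k n) j = if (j : ℕ).testBit n then 1 else 0 := by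
  rw [v, Phi_mk, eval_X]

theorem Th_mk (S : Finset (Fin k)) (f : MvPolynomial (Fin k) (GaloisField p r)) :
    Th p r k S (Ideal.Quotient.mk _ f) =
      aeval (fun i : Fin k => if i ∈ S then 1 - v p r k i else v p r k i) f :=
  rfl

theorem Th_mk_C (S : Finset (Fin k)) (a : GaloisField p r) :
    Th p r k S (Ideal.Quotient.mk _ (C a)) = Ideal.Quotient.mk _ (C a) := by
  rw [Th_mk, aeval_C]
  rfl

theorem Th_v (S : Finset (Fin k)) (n : Fin k) :
    Th p r k S (v p r k n) = if n ∈ S then 1 - v p r k n else v p r k n :=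
  (Th_mk p r k S (X n)).trans (aeval_X _ n)

theorem SigmaPerm_val (S : Finset (Fin k)) (j : Fin (2 ^ k)) :
    (SigmaPerm k S j : ℕ) = (j : ℕ) ^^^ ∑ i ∈ S, 2 ^ (i : ℕ) :=
  rfl

theorem testBit_SigmaPerm (S : Finset (Fin k)) (j : Fin (2 ^ k)) (n : Fin k) :
    (SigmaPerm k S j : ℕ).testBit n = ((j : ℕ).testBit n ^^ decide (n ∈ S)) := by
  have hsum : ∑ i ∈ S, 2 ^ (i : ℕ) = ∑ i ∈ S.map Fin.valEmbedding, 2 ^ i :=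
    (Finset.sum_map S Fin.valEmbedding (2 ^ ·)).symm
  rw [SigmaPerm_val, hsum, Nat.testBit_xor, Nat.testBit_sum_two_pow]
  simp [Fin.val_inj]

theorem Phi_apply_SigmaPerm (S : Finset (Fin k)) (x : B p r k) (j : Fin (2 ^ k)) :
    Phi p r k x (SigmaPerm k S j) = Phi p r k (Th p r k S x) j := by
  let ev (j : Fin (2 ^ k)) := Pi.evalRingHom (fun _ : Fin (2 ^ k) => GaloisField p r) j
  suffices h : (ev (SigmaPerm k S j)).comp (Phi p r k) =
      ((ev j).comp (Phi p r k)).comp (Th p r k S) from RingHom.congr_fun h x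
  refine Ideal.Quotient.ringHom_ext (MvPolynomial.ringHom_ext (fun a => ?_) (fun n => ?_))
  · change Phi p r k (Ideal.Quotient.mk _ (C a)) (SigmaPerm k S j) =
      Phi p r k (Th p r k S (Ideal.Quotient.mk _ (C a))) j
    rw [Th_mk_C, Phi_mk_C, Phi_mk_C]
  · change Phi p r k (v p r k n) _ = Phi p r k (Th p r k S (v p r k n)) j
    rw [Th_v, Phi_v, testBit_SigmaPerm]
    by_cases hn : n ∈ S
    · rw [if_pos hn, map_sub, map_one, Pi.sub_apply, Pi.one_apply, Phi_v]
      cases (j : ℕ).testBit n <;> simp [hn]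
    · simp [hn, Phi_v]

end GrayMap

theorem stmt_11_general (p r k : ℕ) [Fact p.Prime]
    (i : Fin k) (x : B p r k) :
    (fun j : Fin (2 ^ k) => Phi p r k x (SigmaPerm k {i} j)) =
      Phi p r k (Th p r k {i} x) :=
  funext (Phi_apply_SigmaPerm p r k {i} x)

/-- For every `k ≥ 1`, `1 ≤ i ≤ k` and `x ∈ B_k`, `Σ_{i,k}(Φ_k(x)) = Φ_k(Θ_i(x))`. -/
theorem stmt_11 (p r k : ℕ) [Fact p.Prime] (hr : 1 ≤ r) (hk : 1 ≤ k)
    (i : Fin k) (x : B p r k) :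
    (fun j : Fin (2 ^ k) => Phi p r k x (SigmaPerm k {i} j)) =
      Phi p r k (Th p r k {i} x) :=
  stmt_11_general p r k i x
end
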